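/- arXiv:1701.00637 — 3 statements merged into one kernel-verified Lean document; each statement's English description precedes it below -/
import Mathlib

section
/- For every lambda term M, the size of its Takahashi translation satisfies |M*| ≤ 2^(|M|−1). -/
inductive Lam : Type
  | var : ℕ → Lam
  | lam : Lam → Lam
  | app : Lam → Lam → Lam
  deriving DecidableEq

namespace Lam

/-- term size -/
def size : Lam → ℕ
  | var _ => 1
  | lam M => 1 + M.size
  | app M N => 1 + M.size + N.size

/-- lift (shift) free variables ≥ d by 1 -/
def lift (d : ℕ) : Lam → Lam
  | var n => if n < d then var n else var (n+1)
  | lam M => lam (M.lift (d+1))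
  | app M N => app (M.lift d) (N.lift d)

/-- capture-avoiding substitution of N for the free variable x (de Bruijn) -/
def subst : Lam → ℕ → Lam → Lam
  | var n, x, N => if n = x then N else if x < n then var (n-1) else var n
  | lam M, x, N => lam (M.subst (x+1) (N.lift 0))
  | app M P, x, N => app (M.subst x N) (P.subst x N)

/-- number of free occurrences of the variable x -/
def count : Lam → ℕ → ℕ
  | var n, x => if n = x then 1 else 0
  | lam M, x => M.count (x+1)
  | app M N, x => M.count x + N.count x

/-- one-step β-reduction -/
inductive Step : Lam → Lam → Prop
  | beta (M N : Lam) : Step (app (lam M) N) (M.subst 0 N)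
  | appL {M M' : Lam} (N : Lam) : Step M M' → Step (app M N) (app M' N)
  | appR (M : Lam) {N N' : Lam} : Step N N' → Step (app M N) (app M N')
  | abs {M M' : Lam} : Step M M' → Step (lam M) (lam M')

/-- many-step β-reduction (reflexive-transitive closure) -/
def Red : Lam → Lam → Prop := Relation.ReflTransGen Step

/-- n-step β-reduction -/
def Steps : ℕ → Lam → Lam → Prop
  | 0, M, N => M = N
  | n+1, M, N => ∃ P, Step M P ∧ Steps n P N

/-- Takahashi translation (Gross-Knuth complete development) -/
def star : Lam → Lam
  | var n => var n
  | lam M => lam (star M)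
  | app (lam M) N => (star M).subst 0 (star N)
  | app (var n) N => app (var n) (star N)
  | app (app M₁ M₂) N => app (star (app M₁ M₂)) (star N)

/-- iterated Takahashi translation M^(n*) -/
def iterStar (n : ℕ) (M : Lam) : Lam := star^[n] M

end Lam

/-! Substitution at most multiplies sizes, so in the β-case the exponents of the two inductive
bounds add up; in the other cases one constructor is added while the bound at least doubles.
The induction runs on `2 * |M*| ≤ 2 ^ |M|`, the claim without the truncated subtraction. -/

namespace Lam

theorem size_pos (M : Lam) : 0 < M.size := by
  cases M <;> simp only [size] <;> omega

theorem size_lift (d : ℕ) (M : Lam) : (M.lift d).size = M.size := by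
  induction M generalizing d with
  | var n => simp only [lift]; split <;> rfl
  | lam M ih => simp only [lift, size, ih]
  | app M N ihM ihN => simp only [lift, size, ihM, ihN]

theorem size_subst_le (M : Lam) (x : ℕ) (N : Lam) :
    (M.subst x N).size ≤ M.size * N.size := by
  induction M generalizing x N with
  | var n =>
    simp only [subst, size, one_mul]
    split
    · exact le_rfl
    · split <;> exact size_pos N
  | lam M ih =>
    have := ih (x + 1) (N.lift 0)
    simp only [subst, size, size_lift] at this ⊢
    nlinarith [size_pos N]
  | app M P ihM ihP =>
    have := ihM x N
    have := ihP x N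
    simp only [subst, size]
    nlinarith [size_pos N]

theorem two_le_two_pow_size (M : Lam) : 2 ≤ 2 ^ M.size :=
  Nat.le_self_pow (size_pos M).ne' 2

section SizeBound

variable {M N M' N' : Lam}

theorem two_mul_size_lam_le (h : 2 * M'.size ≤ 2 ^ M.size) :
    2 * (lam M').size ≤ 2 ^ (lam M).size := by
  simp only [size, pow_add, pow_one]
  linarith [two_le_two_pow_size M]

theorem two_mul_size_app_le (hM : 2 * M'.size ≤ 2 ^ M.size) (hN : 2 * N'.size ≤ 2 ^ N.size) :
    2 * (app M' N').size ≤ 2 ^ (app M N).size := by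
  simp only [size, pow_add, pow_one]
  nlinarith [two_le_two_pow_size M, two_le_two_pow_size N]

theorem two_mul_size_subst_le (hM : 2 * M'.size ≤ 2 ^ M.size) (hN : 2 * N'.size ≤ 2 ^ N.size) :
    2 * (M'.subst 0 N').size ≤ 2 ^ (app (lam M) N).size := by
  calc 2 * (M'.subst 0 N').size
      ≤ 2 * M'.size * (2 * N'.size) := by nlinarith [size_subst_le M' 0 N']
    _ ≤ 2 ^ M.size * 2 ^ N.size := Nat.mul_le_mul hM hN
    _ ≤ 2 ^ (app (lam M) N).size := by
      rw [← pow_add]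
      exact Nat.pow_le_pow_right two_pos (by simp only [size]; omega)

theorem two_mul_size_star_le : ∀ M : Lam, 2 * M.star.size ≤ 2 ^ M.size
  | var _ => le_rfl
  | lam M => two_mul_size_lam_le (two_mul_size_star_le M)
  | app (lam M) N => two_mul_size_subst_le (two_mul_size_star_le M) (two_mul_size_star_le N)
  | app (var n) N => two_mul_size_app_le (two_mul_size_star_le (var n)) (two_mul_size_star_le N)
  | app (app M₁ M₂) N =>
    two_mul_size_app_le (two_mul_size_star_le (app M₁ M₂)) (two_mul_size_star_le N)

end SizeBound

end Lam

/-- |M*| ≤ 2^(|M|−1) -/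
theorem size_star (M : Lam) : M.star.size ≤ 2 ^ (M.size - 1) := by
  obtain ⟨k, hk⟩ := Nat.exists_eq_add_one_of_ne_zero M.size_pos.ne'
  have h := M.two_mul_size_star_le
  rw [hk, pow_succ] at h
  rw [hk, Nat.add_sub_cancel]
  omega
end

section
/- (Monotonicity of Takahashi translation) If M β-reduces to N in one step, then M* β-reduces to N*, and moreover the reduction can be done in at most |M*| − 1 steps. -/
namespace Lam

theorem lift_lift_of_le (M : Lam) {e d : ℕ} (h : e ≤ d) :
    (M.lift d).lift e = (M.lift e).lift (d + 1) := by
  induction M generalizing e d with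
  | var n => grind [lift]
  | lam M ih => simp only [lift, ih (Nat.succ_le_succ h)]
  | app M N ihM ihN => simp only [lift, ihM h, ihN h]

theorem subst_lift_self (M : Lam) (x : ℕ) (N : Lam) : (M.lift x).subst x N = M := by
  induction M generalizing x N with
  | var n => grind [lift, subst]
  | lam M ih => simp only [lift, subst, ih]
  | app M P ihM ihP => simp only [lift, subst, ihM, ihP]

theorem lift_subst_of_le (M : Lam) {d x : ℕ} (N : Lam) (h : d ≤ x) :
    (M.subst x N).lift d = (M.lift d).subst (x + 1) (N.lift d) := by
  induction M generalizing d x N with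
  | var n => grind [lift, subst]
  | lam M ih =>
    simp only [subst, lift, ih _ (Nat.succ_le_succ h), lift_lift_of_le N (Nat.zero_le d)]
  | app M P ihM ihP => simp only [subst, lift, ihM N h, ihP N h]

theorem lift_subst_of_ge (M : Lam) {d x : ℕ} (N : Lam) (h : x ≤ d) :
    (M.subst x N).lift d = (M.lift (d + 1)).subst x (N.lift d) := by
  induction M generalizing d x N with
  | var n => grind [lift, subst]
  | lam M ih =>
    simp only [subst, lift, ih _ (Nat.succ_le_succ h), lift_lift_of_le N (Nat.zero_le d)]
  | app M P ihM ihP => simp only [subst, lift, ihM N h, ihP N h]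

theorem subst_subst_of_le (A : Lam) {y x : ℕ} (B N : Lam) (h : y ≤ x) :
    (A.subst y B).subst x N = (A.subst (x + 1) (N.lift y)).subst y (B.subst x N) := by
  induction A generalizing y x B N with
  | var n => grind [subst, subst_lift_self]
  | lam A ih =>
    simp only [subst, ih _ _ (Nat.succ_le_succ h), lift_lift_of_le N (Nat.zero_le y),
      lift_subst_of_le B N (Nat.zero_le x)]
  | app A P ihA ihP => simp only [subst, ihA B N h, ihP B N h]

inductive Par : Lam → Lam → Prop
  | var (n : ℕ) : Par (var n) (var n)
  | lam {M M' : Lam} : Par M M' → Par (lam M) (lam M')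
  | app {M M' N N' : Lam} : Par M M' → Par N N' → Par (app M N) (app M' N')
  | beta {M M' N N' : Lam} : Par M M' → Par N N' → Par (app (lam M) N) (M'.subst 0 N')

theorem Par.refl (M : Lam) : Par M M := by
  induction M with
  | var n => exact Par.var n
  | lam _ ih => exact Par.lam ih
  | app _ _ ihM ihN => exact Par.app ihM ihN

theorem Step.par {M N : Lam} (h : Step M N) : Par M N := by
  induction h with
  | beta M N => exact Par.beta (Par.refl M) (Par.refl N)
  | appL N _ ih => exact Par.app ih (Par.refl N)
  | appR M _ ih => exact Par.app (Par.refl M) ih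
  | abs _ ih => exact Par.lam ih

theorem Par.lift {M M' : Lam} (h : Par M M') (d : ℕ) : Par (M.lift d) (M'.lift d) := by
  induction h generalizing d with
  | var n => exact Par.refl _
  | lam _ ih => exact Par.lam (ih (d + 1))
  | app _ _ ihM ihN => exact Par.app (ihM d) (ihN d)
  | @beta A A' B B' _ _ ihA ihB =>
    rw [lift_subst_of_ge A' B' (Nat.zero_le d)]
    exact Par.beta (ihA (d + 1)) (ihB d)

theorem Par.subst {M M' N N' : Lam} (hM : Par M M') (hN : Par N N') (x : ℕ) :
    Par (M.subst x N) (M'.subst x N') := by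
  induction hM generalizing x N N' with
  | var n => simp only [Lam.subst]; split_ifs <;> first | exact hN | exact Par.refl _
  | lam _ ih => exact Par.lam (ih (hN.lift 0) (x + 1))
  | app _ _ ihM ihP => exact Par.app (ihM hN x) (ihP hN x)
  | @beta A A' B B' _ _ ihA ihB =>
    rw [Lam.subst, Lam.subst, subst_subst_of_le A' B' N' (Nat.zero_le x)]
    exact Par.beta (ihA (hN.lift 0) (x + 1)) (ihB hN x)

theorem Par.par_star {M N : Lam} (h : Par M N) : Par N M.star := by
  induction h with
  | var n => exact Par.var n
  | lam _ ih => exact Par.lam ih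
  | @app M M' N N' hM _ ihM ihN =>
    cases M with
    | var n => cases hM; exact Par.app ihM ihN
    | lam A => cases hM with | lam hA => cases ihM with | lam hA' => exact Par.beta hA' ihN
    | app => exact Par.app ihM ihN
  | beta _ _ ihA ihB => exact ihA.subst ihB 0

theorem Steps.trans {a b : ℕ} {M P N : Lam} (h₁ : Steps a M P) (h₂ : Steps b P N) :
    Steps (a + b) M N := by
  induction a generalizing M with
  | zero => cases h₁; simpa using h₂
  | succ a ih =>
    obtain ⟨Q, hMQ, hQP⟩ := h₁
    rw [Nat.add_right_comm]
    exact ⟨Q, hMQ, ih hQP⟩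

theorem Steps.map {f : Lam → Lam} (hf : ∀ {A B}, Step A B → Step (f A) (f B)) {l : ℕ}
    {M N : Lam} (h : Steps l M N) : Steps l (f M) (f N) := by
  induction l generalizing M with
  | zero => cases h; rfl
  | succ l ih =>
    obtain ⟨P, hMP, hPN⟩ := h
    exact ⟨f P, hf hMP, ih hPN⟩

theorem Steps.red {l : ℕ} {M N : Lam} (h : Steps l M N) : Red M N := by
  induction l generalizing M with
  | zero => cases h; exact Relation.ReflTransGen.refl
  | succ l ih =>
    obtain ⟨P, hMP, hPN⟩ := h
    exact Relation.ReflTransGen.head hMP (ih hPN)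

theorem Par.exists_steps_lt_size {M N : Lam} (h : Par M N) : ∃ l, Steps l M N ∧ l < M.size := by
  induction h with
  | var n => exact ⟨0, rfl, by simp [size]⟩
  | lam _ ih =>
    obtain ⟨l, hl, hlt⟩ := ih
    exact ⟨l, hl.map Step.abs, by simp only [size]; omega⟩
  | app _ _ ihM ihN =>
    obtain ⟨l₁, hl₁, hlt₁⟩ := ihM
    obtain ⟨l₂, hl₂, hlt₂⟩ := ihN
    exact ⟨l₁ + l₂, (hl₁.map (Step.appL _)).trans (hl₂.map (Step.appR _)),
      by simp only [size]; omega⟩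
  | @beta A A' B B' _ _ ihA ihB =>
    obtain ⟨l₁, hl₁, hlt₁⟩ := ihA
    obtain ⟨l₂, hl₂, hlt₂⟩ := ihB
    have hβ : Steps 1 (Lam.app (Lam.lam A') B') (A'.subst 0 B') := ⟨_, Step.beta A' B', rfl⟩
    exact ⟨l₁ + l₂ + 1,
      ((hl₁.map (Step.appL _ ∘ Step.abs)).trans (hl₂.map (Step.appR _))).trans hβ,
      by simp only [size]; omega⟩

end Lam

/-- monotonicity: if M → N then M* ↠ N*, in at most |M*| − 1 steps -/
theorem star_mono {M N : Lam} (h : Lam.Step M N) :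
    Lam.Red M.star N.star ∧
      ∃ l : ℕ, Lam.Steps l M.star N.star ∧ l ≤ M.star.size - 1 := by
  have hpar : Lam.Par M.star N.star := h.par.par_star.par_star
  obtain ⟨l, hl, hlt⟩ := hpar.exists_steps_lt_size
  exact ⟨hl.red, l, hl, by omega⟩
end

section
/- (Every term of the zigzag reaches the common reduct) Let M₀ =β M_k via a zigzag [M₀, M₁, …, M_k] with r forward arrows in total, and let m_l be the number of backward arrows among the first r arrows. Then every term M_i (0 ≤ i ≤ k) in the zigzag satisfies M_i ↠ M_r^(m_l*); i.e., M_r^(m_l*) is a common reduct of all terms appearing in the zigzag. -/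
/-!
Takahashi's translation has the Z-property: `M → N` implies `N ↠ M* ↠ N*`, and moreover
`M ↠ M*`. Walking along a zigzag, every arrow pointing against the direction of the walk is
absorbed by one more application of `*`, while arrows along it are followed. So from `M_i` with
`i ≤ r` we reach `M_r^(c*)`, where `c ≤ m_l` counts the backward arrows in `[i, r)`; from `M_i`
with `i ≥ r` we reach `M_r^(c*)`, where `c` counts the forward arrows in `[r, i)`. Of the `r`
forward arrows, `r - m_l` lie before position `r`, so at most `m_l` lie after it. Finally,
`M ↠ M*` pads any count `c ≤ m_l` up to `m_l`.
-/

open Relation Finset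

theorem card_filter_Ico_add_one (P : ℕ → Prop) [DecidablePred P] {p q : ℕ} (hpq : p ≤ q) :
    #{i ∈ Ico p (q + 1) | P i} = #{i ∈ Ico p q | P i} + if P q then 1 else 0 := by
  rw [Nat.Ico_succ_right_eq_insert_Ico hpq, filter_insert]
  split_ifs
  · exact card_insert_of_notMem fun h ↦ by simp at h
  · rfl

theorem card_filter_Ico_eq_card_filter_not (P : ℕ → Prop) [DecidablePred P] (k : ℕ) :
    #{i ∈ Ico #{i ∈ range k | P i} k | P i} =
      #{i ∈ range #{i ∈ range k | P i} | ¬P i} := by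
  set m := #{i ∈ range k | P i}
  have hmk : m ≤ k := (card_filter_le _ _).trans (card_range k).le
  have hsplit : #{i ∈ range m | P i} + #{i ∈ Ico m k | P i} = m := by
    rw [range_eq_Ico, ← card_union_of_disjoint
      (disjoint_filter_filter (Ico_disjoint_Ico_consecutive 0 m k)), ← filter_union,
      Ico_union_Ico_eq_Ico (Nat.zero_le m) hmk, ← range_eq_Ico]
  have hcompl := card_filter_add_card_filter_not (s := range m) (p := fun i ↦ P i)
  rw [card_range] at hcompl
  omega

section Zigzag

variable {α : Type*} {r : α → α → Prop} {f : α → α}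

/-- The Z-property of Dehornoy and van Oostrom (`a → b` gives `b ↠ f a ↠ f b`), together with
`a ↠ f a`. -/
structure IsZMap (r : α → α → Prop) (f : α → α) : Prop where
  reflTransGen_self : ∀ a, ReflTransGen r a (f a)
  reflTransGen_of_rel : ∀ {a b}, r a b → ReflTransGen r b (f a)
  reflTransGen_map : ∀ {a b}, r a b → ReflTransGen r (f a) (f b)

def IsZigzag (r : α → α → Prop) (k : ℕ) (a : ℕ → α) (d : ℕ → Bool) : Prop :=
  ∀ i < k, if d i then r (a i) (a (i + 1)) else r (a (i + 1)) (a i)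

namespace IsZMap

theorem reflTransGen_map_of_reflTransGen (hf : IsZMap r f) {a b : α} (h : ReflTransGen r a b) :
    ReflTransGen r (f a) (f b) :=
  ReflTransGen.lift' f (fun _ _ ↦ hf.reflTransGen_map) _ _ h

theorem reflTransGen_iterate (hf : IsZMap r f) {a b : α} (h : ReflTransGen r a b) (n : ℕ) :
    ReflTransGen r (f^[n] a) (f^[n] b) := by
  induction n with
  | zero => exact h
  | succ n ih =>
    simp only [Function.iterate_succ_apply']
    exact hf.reflTransGen_map_of_reflTransGen ih

theorem reflTransGen_iterate_of_le (hf : IsZMap r f) (a : α) {m n : ℕ} (hmn : m ≤ n) :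
    ReflTransGen r (f^[m] a) (f^[n] a) := by
  induction n, hmn using Nat.le_induction with
  | base => exact .refl
  | succ n _ ih =>
    rw [Function.iterate_succ_apply']
    exact ih.trans (hf.reflTransGen_self _)

end IsZMap

namespace IsZigzag

variable {k : ℕ} {a : ℕ → α} {d : ℕ → Bool}

theorem rel_of_true (hz : IsZigzag r k a d) {i : ℕ} (hi : i < k) (hd : d i = true) :
    r (a i) (a (i + 1)) := by
  simpa [hd] using hz i hi

theorem rel_of_false (hz : IsZigzag r k a d) {i : ℕ} (hi : i < k) (hd : d i = false) :
    r (a (i + 1)) (a i) := by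
  simpa [hd] using hz i hi

theorem reflTransGen_iterate_card_false (hz : IsZigzag r k a d) (hf : IsZMap r f) {p q : ℕ}
    (hpq : p ≤ q) (hqk : q ≤ k) :
    ReflTransGen r (a p) (f^[#{i ∈ Ico p q | d i = false}] (a q)) := by
  induction q, hpq using Nat.le_induction with
  | base => simpa using ReflTransGen.refl
  | succ q hpq ih =>
    have ih := ih (by omega)
    rw [card_filter_Ico_add_one _ hpq]
    cases hd : d q
    · rw [if_pos rfl, Function.iterate_succ_apply]
      exact ih.trans
        (hf.reflTransGen_iterate (hf.reflTransGen_of_rel (hz.rel_of_false (by omega) hd)) _)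
    · rw [if_neg (by simp), add_zero]
      exact ih.trans (hf.reflTransGen_iterate (.single (hz.rel_of_true (by omega) hd)) _)

theorem reflTransGen_iterate_card_true (hz : IsZigzag r k a d) (hf : IsZMap r f) {p q : ℕ}
    (hpq : p ≤ q) (hqk : q ≤ k) :
    ReflTransGen r (a q) (f^[#{i ∈ Ico p q | d i = true}] (a p)) := by
  induction q, hpq using Nat.le_induction with
  | base => simpa using ReflTransGen.refl
  | succ q hpq ih =>
    have ih := ih (by omega)
    rw [card_filter_Ico_add_one _ hpq]
    cases hd : d q
    · rw [if_neg (by simp), add_zero]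
      exact (ReflTransGen.single (hz.rel_of_false (by omega) hd)).trans ih
    · rw [if_pos rfl, Function.iterate_succ_apply']
      exact (hf.reflTransGen_of_rel (hz.rel_of_true (by omega) hd)).trans
        (hf.reflTransGen_map_of_reflTransGen ih)

end IsZigzag

end Zigzag

namespace Lam

theorem red_lam {M M' : Lam} (h : Red M M') : Red (lam M) (lam M') :=
  ReflTransGen.lift lam (fun _ _ ↦ Step.abs) _ _ h

theorem red_appL {M M' : Lam} (N : Lam) (h : Red M M') : Red (app M N) (app M' N) :=
  ReflTransGen.lift (app · N) (fun _ _ ↦ Step.appL N) _ _ h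

theorem red_appR (M : Lam) {N N' : Lam} (h : Red N N') : Red (app M N) (app M N') :=
  ReflTransGen.lift (app M) (fun _ _ ↦ Step.appR M) _ _ h

theorem red_app {M M' N N' : Lam} (hM : Red M M') (hN : Red N N') :
    Red (app M N) (app M' N') :=
  (red_appL N hM).trans (red_appR M' hN)

theorem exists_eq_lam_of_red_lam {M N : Lam} (h : Red (lam M) N) :
    ∃ M', N = lam M' ∧ Red M M' := by
  induction h with
  | refl => exact ⟨M, rfl, .refl⟩
  | tail _ hstep ih =>
    obtain ⟨M', rfl, hM'⟩ := ih
    cases hstep with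
    | abs hstep => exact ⟨_, rfl, hM'.tail hstep⟩

theorem red_of_red_lam {M M' : Lam} (h : Red (lam M) (lam M')) : Red M M' := by
  obtain ⟨_, heq, hM⟩ := exists_eq_lam_of_red_lam h
  exact lam.inj heq ▸ hM

theorem lift_lift (M : Lam) {d e : ℕ} (hed : e ≤ d) :
    (M.lift e).lift (d + 1) = (M.lift d).lift e := by
  induction M generalizing d e with
  | var n =>
    simp only [lift]
    split_ifs <;> simp only [lift] <;> split_ifs <;> first | rfl | omega
  | lam M ih => exact congrArg lam (ih (by omega))
  | app M N ihM ihN => simp only [lift, ihM hed, ihN hed]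

theorem lift_subst_of_le_s19 (A : Lam) {x d : ℕ} (B : Lam) (hxd : x ≤ d) :
    (A.subst x B).lift d = (A.lift (d + 1)).subst x (B.lift d) := by
  induction A generalizing x d B with
  | var n =>
    simp only [subst, lift]
    split_ifs <;> simp only [lift, subst] <;> split_ifs <;>
      first | rfl | omega | (simp only [var.injEq]; omega)
  | lam A ih =>
    simp only [subst, lift]
    rw [ih _ (by omega), lift_lift B (Nat.zero_le d)]
  | app A₁ A₂ ih₁ ih₂ => simp only [subst, lift, ih₁ B hxd, ih₂ B hxd]

theorem lift_subst_of_ge_s19 (A : Lam) {x d : ℕ} (B : Lam) (hdx : d ≤ x) :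
    (A.subst x B).lift d = (A.lift d).subst (x + 1) (B.lift d) := by
  induction A generalizing x d B with
  | var n =>
    simp only [subst, lift]
    split_ifs <;> simp only [lift, subst] <;> split_ifs <;>
      first | rfl | omega | (simp only [var.injEq]; omega)
  | lam A ih =>
    simp only [subst, lift]
    rw [ih _ (by omega), lift_lift B (Nat.zero_le d)]
  | app A₁ A₂ ih₁ ih₂ => simp only [subst, lift, ih₁ B hdx, ih₂ B hdx]

@[simp]
theorem subst_lift (M : Lam) (d : ℕ) (N : Lam) : (M.lift d).subst d N = M := by
  induction M generalizing d N with
  | var n =>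
    simp only [lift]
    split_ifs <;> simp only [subst] <;> split_ifs <;> first | rfl | omega
  | lam M ih => simp only [lift, subst, ih]
  | app M P ih₁ ih₂ => simp only [lift, subst, ih₁, ih₂]

theorem subst_subst (A : Lam) {y x : ℕ} (B C : Lam) (hyx : y ≤ x) :
    (A.subst y B).subst x C = (A.subst (x + 1) (C.lift y)).subst y (B.subst x C) := by
  induction A generalizing y x B C with
  | var n =>
    simp only [subst]
    split_ifs <;> simp only [subst, subst_lift] <;> (try split_ifs) <;>
      first | rfl | omega
  | lam A ih =>
    simp only [subst]
    rw [ih _ _ (by omega), lift_lift C (Nat.zero_le y), ← lift_subst_of_ge_s19 B C (Nat.zero_le x)]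
  | app A₁ A₂ ih₁ ih₂ => simp only [subst, ih₁ B C hyx, ih₂ B C hyx]

theorem step_lift {M N : Lam} (h : Step M N) (d : ℕ) : Step (M.lift d) (N.lift d) := by
  induction h generalizing d with
  | beta M N =>
    rw [lift_subst_of_le_s19 M N (Nat.zero_le d)]
    exact .beta _ _
  | appL N _ ih => exact .appL _ (ih d)
  | appR M _ ih => exact .appR _ (ih d)
  | abs _ ih => exact .abs (ih (d + 1))

theorem red_lift {M N : Lam} (h : Red M N) (d : ℕ) : Red (M.lift d) (N.lift d) :=
  ReflTransGen.lift (lift d) (fun _ _ hs ↦ step_lift hs d) _ _ h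

theorem step_subst_left {A A' : Lam} (h : Step A A') (x : ℕ) (B : Lam) :
    Step (A.subst x B) (A'.subst x B) := by
  induction h generalizing x B with
  | beta M N =>
    rw [subst_subst M N B (Nat.zero_le x)]
    exact .beta _ _
  | appL N _ ih => exact .appL _ (ih x B)
  | appR M _ ih => exact .appR _ (ih x B)
  | abs _ ih => exact .abs (ih (x + 1) _)

theorem red_subst_right (A : Lam) {B B' : Lam} (h : Red B B') (x : ℕ) :
    Red (A.subst x B) (A.subst x B') := by
  induction A generalizing x B B' with
  | var n =>
    simp only [subst]
    split_ifs
    exacts [h, .refl, .refl]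
  | lam A ih => exact red_lam (ih (red_lift h 0) (x + 1))
  | app A P ih₁ ih₂ => exact red_app (ih₁ h x) (ih₂ h x)

theorem red_subst {A A' B B' : Lam} (hA : Red A A') (hB : Red B B') (x : ℕ) :
    Red (A.subst x B) (A'.subst x B') :=
  (ReflTransGen.lift (subst · x B) (fun _ _ hs ↦ step_subst_left hs x B) _ _ hA).trans
    (red_subst_right A' hB x)

theorem star_lift (M : Lam) (d : ℕ) : star (M.lift d) = (star M).lift d := by
  induction M generalizing d with
  | var n => simp only [lift, star]; split_ifs <;> rfl
  | lam M ih => simp only [lift, star, ih]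
  | app M N ihM ihN =>
    cases M with
    | var n => simp only [lift, star]; split_ifs <;> simp only [star, ihN]
    | lam P =>
      have hP : star (P.lift (d + 1)) = (star P).lift (d + 1) := by
        simpa only [lift, star, lam.injEq] using ihM d
      simp only [lift, star, ihN, hP, lift_subst_of_le_s19 (star P) (star N) (Nat.zero_le d)]
    | app A B => simp only [lift, star, ihN] at ihM ⊢; rw [ihM]

theorem red_star_app {A B M N : Lam} (hA : Red A (star M)) (hB : Red B (star N)) :
    Red (app A B) (star (app M N)) := by
  cases M with
  | lam P => exact (red_app hA hB).tail (Step.beta _ _)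
  | _ => exact red_app hA hB

theorem red_star (M : Lam) : Red M (star M) := by
  induction M with
  | var n => exact .refl
  | lam M ih => exact red_lam ih
  | app M N ihM ihN => exact red_star_app ihM ihN

theorem red_subst_star (A : Lam) (x : ℕ) (B : Lam) :
    Red ((star A).subst x (star B)) (star (A.subst x B)) := by
  induction A generalizing x B with
  | var n =>
    simp only [star, subst]
    split_ifs <;> exact .refl
  | lam P ih =>
    simp only [star, subst, ← star_lift]
    exact red_lam (ih (x + 1) (B.lift 0))
  | app A₁ Q ih₁ ih₂ =>
    cases A₁ with
    | lam P =>
      -- structural induction suffices: the hypothesis for `lam P` yields the one for `P`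
      have hP := red_of_red_lam (ih₁ x B)
      simp only [star, subst, ← star_lift] at hP ⊢
      rw [subst_subst (star P) (star Q) (star B) (Nat.zero_le x), ← star_lift]
      exact red_subst hP (ih₂ x B) 0
    | _ => exact red_star_app (ih₁ x B) (ih₂ x B)

theorem red_star_of_step {M N : Lam} (h : Step M N) : Red N (star M) := by
  induction h with
  | beta P Q => exact red_subst (red_star P) (red_star Q) 0
  | appL N _ ih => exact red_star_app ih (red_star N)
  | appR M _ ih => exact red_star_app (red_star M) ih
  | abs _ ih => exact red_lam ih

theorem star_red_star_of_step {M N : Lam} (h : Step M N) : Red (star M) (star N) := by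
  induction h with
  | beta P Q => exact red_subst_star P 0 Q
  | @appL M M' N hM ih =>
    cases hM with
    | abs hP => exact red_subst (red_of_red_lam ih) .refl 0
    | _ => exact red_star_app ih .refl
  | @appR M N N' _ ih =>
    cases M with
    | lam P => exact red_subst .refl ih 0
    | _ => exact red_star_app .refl ih
  | abs _ ih => exact red_lam ih

theorem isZMap_star : IsZMap Step star where
  reflTransGen_self := red_star
  reflTransGen_of_rel := red_star_of_step
  reflTransGen_map := star_red_star_of_step

end Lam

/-- every term of the zigzag reduces to the common reduct
(Ms r)^(m_l*), where the zigzag `Ms 0, …, Ms k` has directions `d i`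
(`true` = forward `Ms i → Ms (i+1)`, `false` = backward `Ms (i+1) → Ms i`),
r is the total number of forward arrows and m_l the number of backward arrows
among the first r arrows. -/
theorem zigzag_common_reduct (k : ℕ) (Ms : ℕ → Lam) (d : ℕ → Bool)
    (hzig : ∀ i < k, if d i then Lam.Step (Ms i) (Ms (i+1))
                     else Lam.Step (Ms (i+1)) (Ms i)) :
    ∀ r ml : ℕ,
      r = ((Finset.range k).filter (fun i => d i = true)).card →
      ml = ((Finset.range r).filter (fun i => d i = false)).card →
      ∀ i ≤ k, Lam.Red (Ms i) (Lam.iterStar ml (Ms r)) := by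
  intro r ml hr hml i hik
  have hz : IsZigzag Lam.Step k Ms d := hzig
  have hf := Lam.isZMap_star
  have hrk : r ≤ k := hr ▸ (card_filter_le _ _).trans (card_range k).le
  rcases le_total i r with hir | hri
  · refine (hz.reflTransGen_iterate_card_false hf hir hrk).trans
      (hf.reflTransGen_iterate_of_le _ ?_)
    rw [hml, range_eq_Ico]
    exact card_le_card (filter_subset_filter _ (Ico_subset_Ico_left (Nat.zero_le i)))
  · refine (hz.reflTransGen_iterate_card_true hf hri hik).trans
      (hf.reflTransGen_iterate_of_le _ ?_)
    calc #{j ∈ Ico r i | d j = true}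
        ≤ #{j ∈ Ico r k | d j = true} :=
          card_le_card (filter_subset_filter _ (Ico_subset_Ico_right hik))
      _ = ml := by
        rw [hml, hr, card_filter_Ico_eq_card_filter_not]
        simp only [Bool.not_eq_true]
end
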